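/- arXiv:2603.01162 — 6 statements merged into one kernel-verified Lean document; each statement's English description precedes it below -/
import Mathlib

section
/- Let G ≥ 2 be a natural number, let W : Fin G → ℝ^d be vectors and Z : Fin G → ℝ be real numbers. Then the group-relative (leave-one-out baseline) average equals a second-order U-statistic with symmetric kernel: (1/G) ∑_{g} (Z_g − (1/(G−1)) ∑_{k ≠ g} Z_k) • W_g = (1/(G(G−1))) ∑_{1 ≤ i < j ≤ G} (Z_i − Z_j) • (W_i − W_j). -/
/-!
Each leave-one-out centred reward is the average of the differences `Z g - Z k` over `k ≠ g`,
so the left side is `(G (G - 1))⁻¹` times the sum of `(Z i - Z j) • W i` over ordered pairs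
`i ≠ j`. Pairing `(i, j)` with `(j, i)` turns this into a sum over `i < j` of
`(Z i - Z j) • W i + (Z j - Z i) • W j = (Z i - Z j) • (W i - W j)`.
-/

open Finset

theorem sub_inv_mul_sum_erase_eq {ι K : Type*} [DecidableEq ι] [Field K] {s : Finset ι} {i : ι}
    (hi : i ∈ s) (hs : (#s : K) - 1 ≠ 0) (z : ι → K) :
    z i - ((#s : K) - 1)⁻¹ * ∑ k ∈ s.erase i, z k =
      ((#s : K) - 1)⁻¹ * ∑ k ∈ s.erase i, (z i - z k) := by
  rw [sum_sub_distrib, sum_const, card_erase_of_mem hi, nsmul_eq_mul,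
    Nat.cast_sub (one_le_card.mpr ⟨i, hi⟩), Nat.cast_one]
  field_simp

theorem sum_sum_erase_eq_sum_lt_add_swap {ι M : Type*} [Fintype ι] [LinearOrder ι]
    [AddCommMonoid M] (f : ι → ι → M) :
    ∑ i, ∑ j ∈ univ.erase i, f i j =
      ∑ p ∈ univ.filter (fun p : ι × ι => p.1 < p.2), (f p.1 p.2 + f p.2 p.1) := by
  have hswap : ∑ p ∈ univ.filter (fun p : ι × ι => p.1 < p.2), f p.2 p.1 =
      ∑ p ∈ univ.filter (fun p : ι × ι => p.2 < p.1), f p.1 p.2 :=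
    sum_equiv (Equiv.prodComm ι ι) (by simp) (by simp)
  rw [sum_add_distrib, hswap, sum_filter, sum_filter, ← sum_add_distrib, ← univ_product_univ,
    sum_product]
  refine sum_congr rfl fun i _ => ?_
  rw [← filter_ne', sum_filter]
  refine sum_congr rfl fun j _ => ?_
  rcases lt_trichotomy i j with h | rfl | h
  · simp [h, h.ne', h.not_gt]
  · simp
  · simp [h, h.ne, h.not_gt]

theorem sub_smul_add_sub_smul_eq_sub_smul_sub {R M : Type*} [Ring R] [AddCommGroup M] [Module R M]
    (a b : R) (x y : M) : (a - b) • x + (b - a) • y = (a - b) • (x - y) := by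
  rw [smul_sub, ← neg_sub a b, neg_smul]
  abel

theorem sum_sum_erase_sub_smul_eq_sum_lt {ι R M : Type*} [Fintype ι] [LinearOrder ι] [Ring R]
    [AddCommGroup M] [Module R M] (z : ι → R) (w : ι → M) :
    ∑ i, (∑ j ∈ univ.erase i, (z i - z j)) • w i =
      ∑ p ∈ univ.filter (fun p : ι × ι => p.1 < p.2), (z p.1 - z p.2) • (w p.1 - w p.2) := by
  simp_rw [sum_smul, sum_sum_erase_eq_sum_lt_add_swap, sub_smul_add_sub_smul_eq_sub_smul_sub]

/-- The group-relative (leave-one-out baseline) average equals a second-order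
U-statistic with symmetric kernel (Lemma 1 of the paper). -/
theorem grpo_gradient_is_U_statistic (G d : ℕ) (hG : 2 ≤ G)
    (W : Fin G → EuclideanSpace ℝ (Fin d)) (Z : Fin G → ℝ) :
    (G : ℝ)⁻¹ • ∑ g : Fin G,
        (Z g - ((G : ℝ) - 1)⁻¹ * ∑ k ∈ univ.erase g, Z k) • W g =
      ((G : ℝ) * ((G : ℝ) - 1))⁻¹ •
        ∑ p ∈ univ.filter (fun p : Fin G × Fin G => p.1 < p.2),
          (Z p.1 - Z p.2) • (W p.1 - W p.2) := by
  have hG1 : (#(univ : Finset (Fin G)) : ℝ) - 1 ≠ 0 := by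
    rw [card_univ, Fintype.card_fin, sub_ne_zero, Nat.cast_ne_one]
    omega
  have hdev := fun g => sub_inv_mul_sum_erase_eq (mem_univ g) hG1 Z
  rw [card_univ, Fintype.card_fin] at hdev
  simp_rw [hdev, mul_smul, ← smul_sum, smul_smul, ← mul_inv, sum_sum_erase_sub_smul_eq_sum_lt]
end

section
/- For any n ≥ 2, the mean squared error of the second-order U-statistic U = (2/(n(n−1))) ∑_{1 ≤ i < j ≤ n} h(X_i, X_j) about its mean satisfies the two-sided bound (1/n) E‖ζ₁(X₁)‖² ≤ E‖U − h₀‖² ≤ (1/n) E‖ζ₁(X₁)‖² + 32 · E‖h(X₁, X₂)‖² / (n(n−1)); in particular the first-order term (1/n) E‖ζ₁(X₁)‖² is the leading term of the MSE, and the remainder is O(E‖h‖²/n²). -/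
/-!
Write `θ = E h(X₁, X₂)`, `σ² = E‖h₁(X₁) - θ‖²` and `G = E‖h(X₁, X₂) - θ‖²`. Expanding the square
of `U - θ` over pairs of index pairs, the covariance of two centred kernel evaluations is `G` when
the pairs coincide, `σ²` when they share exactly one index (condition on the shared variable) and
`0` when they are disjoint (independence). Counting pairs gives the exact variance formula
`E‖U - θ‖² = 2 (G + 2 (n - 2) σ²) / (n (n - 1)) = 4 σ² / n + 2 (G - 2 σ²) / (n (n - 1))`,
and the two-sided bound follows from Hoeffding's inequality `2 σ² ≤ G` and from
`G = E‖h(X₁, X₂)‖² - ‖θ‖²`.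
-/

open MeasureTheory ProbabilityTheory Finset
open scoped RealInnerProductSpace

section L2

variable {α E : Type*} [MeasurableSpace α] {μ : Measure α}
  [NormedAddCommGroup E] [InnerProductSpace ℝ E]

lemma MeasureTheory.MemLp.integrable_inner {f g : α → E} (hf : MemLp f 2 μ) (hg : MemLp g 2 μ) :
    Integrable (fun x => ⟪f x, g x⟫) μ := by
  refine (hf.norm.integrable_mul hg.norm).mono (hf.1.inner hg.1) ?_
  filter_upwards with x
  simpa using abs_real_inner_le_norm (f x) (g x)

lemma MeasureTheory.MemLp.integrable_norm_sq {f : α → E} (hf : MemLp f 2 μ) :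
    Integrable (fun x => ‖f x‖ ^ 2) μ := by
  simpa only [real_inner_self_eq_norm_sq] using hf.integrable_inner hf

lemma integral_norm_sum_sq {ι : Type*} (s : Finset ι) {f : ι → α → E}
    (hf : ∀ i ∈ s, MemLp (f i) 2 μ) :
    ∫ x, ‖∑ i ∈ s, f i x‖ ^ 2 ∂μ = ∑ i ∈ s, ∑ j ∈ s, ∫ x, ⟪f i x, f j x⟫ ∂μ := by
  simp_rw [← real_inner_self_eq_norm_sq, sum_inner, inner_sum]
  rw [integral_finsetSum _ fun i hi => integrable_finsetSum _ fun j hj =>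
    (hf i hi).integrable_inner (hf j hj)]
  exact sum_congr rfl fun i hi => integral_finsetSum _ fun j hj =>
    (hf i hi).integrable_inner (hf j hj)

lemma integral_norm_add_sq {f g : α → E} (hf : MemLp f 2 μ) (hg : MemLp g 2 μ) :
    ∫ x, ‖f x + g x‖ ^ 2 ∂μ
      = ∫ x, ‖f x‖ ^ 2 ∂μ + 2 * ∫ x, ⟪f x, g x⟫ ∂μ + ∫ x, ‖g x‖ ^ 2 ∂μ := by
  have hfg := (hf.integrable_inner hg).const_mul 2
  simp_rw [norm_add_sq_real]
  rw [integral_add (hf.integrable_norm_sq.fun_add hfg) hg.integrable_norm_sq,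
    integral_add hf.integrable_norm_sq hfg, integral_const_mul]

lemma integral_norm_sub_sq {f g : α → E} (hf : MemLp f 2 μ) (hg : MemLp g 2 μ) :
    ∫ x, ‖f x - g x‖ ^ 2 ∂μ
      = ∫ x, ‖f x‖ ^ 2 ∂μ - 2 * ∫ x, ⟪f x, g x⟫ ∂μ + ∫ x, ‖g x‖ ^ 2 ∂μ := by
  have hfg := (hf.integrable_inner hg).const_mul 2
  simp_rw [norm_sub_sq_real]
  rw [integral_add (hf.integrable_norm_sq.sub' hfg) hg.integrable_norm_sq,
    integral_sub hf.integrable_norm_sq hfg, integral_const_mul]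

lemma integral_inner_add_right {f g k : α → E} (hf : MemLp f 2 μ) (hg : MemLp g 2 μ)
    (hk : MemLp k 2 μ) :
    ∫ x, ⟪f x, g x + k x⟫ ∂μ = ∫ x, ⟪f x, g x⟫ ∂μ + ∫ x, ⟪f x, k x⟫ ∂μ := by
  simp_rw [inner_add_right]
  exact integral_add (hf.integrable_inner hg) (hf.integrable_inner hk)

variable [IsProbabilityMeasure μ] [CompleteSpace E]

lemma integral_norm_sub_integral_sq {f : α → E} (hf : MemLp f 2 μ) :
    ∫ x, ‖f x - ∫ y, f y ∂μ‖ ^ 2 ∂μ = ∫ x, ‖f x‖ ^ 2 ∂μ - ‖∫ x, f x ∂μ‖ ^ 2 := by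
  rw [integral_norm_sub_sq hf (memLp_const _), integral_const, probReal_univ, one_smul]
  simp_rw [real_inner_comm _ (f _)]
  rw [integral_inner (hf.integrable one_le_two), real_inner_self_eq_norm_sq]
  ring

lemma norm_integral_sq_le_integral_norm_sq {f : α → E} (hf : MemLp f 2 μ) :
    ‖∫ x, f x ∂μ‖ ^ 2 ≤ ∫ x, ‖f x‖ ^ 2 ∂μ := by
  have : 0 ≤ ∫ x, ‖f x - ∫ y, f y ∂μ‖ ^ 2 ∂μ := integral_nonneg fun x => sq_nonneg _
  rw [integral_norm_sub_integral_sq hf] at this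
  linarith

end L2

lemma MeasureTheory.MeasurePreserving.integral_comp_of_aestronglyMeasurable {α β G : Type*}
    [MeasurableSpace α] [MeasurableSpace β] [NormedAddCommGroup G] [NormedSpace ℝ G]
    {μ : Measure α} {ν : Measure β} {f : α → β} (hf : MeasurePreserving f μ ν) {g : β → G}
    (hg : AEStronglyMeasurable g ν) :
    ∫ x, g (f x) ∂μ = ∫ y, g y ∂ν := by
  rw [← hf.map_eq] at hg ⊢
  exact (integral_map hf.aemeasurable hg).symm

section Product

variable {α β E : Type*} [MeasurableSpace α] [MeasurableSpace β] {μ : Measure α} {ν : Measure β}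
  [NormedAddCommGroup E] [InnerProductSpace ℝ E] [CompleteSpace E]

lemma integral_inner_prod [SFinite μ] [SFinite ν] {u : α → E} {v : β → E}
    (hu : Integrable u μ) (hv : Integrable v ν) :
    ∫ z, ⟪u z.1, v z.2⟫ ∂(μ.prod ν) = ⟪∫ x, u x ∂μ, ∫ y, v y ∂ν⟫ := by
  have hint : Integrable (fun z : α × β => ⟪u z.1, v z.2⟫) (μ.prod ν) := by
    refine (hu.norm.mul_prod hv.norm).mono
      ((hu.1.comp_quasiMeasurePreserving Measure.quasiMeasurePreserving_fst).inner
        (hv.1.comp_quasiMeasurePreserving Measure.quasiMeasurePreserving_snd)) ?_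
    filter_upwards with z
    simpa using abs_real_inner_le_norm (u z.1) (v z.2)
  rw [integral_prod _ hint]
  simp_rw [integral_inner hv, real_inner_comm (∫ y, v y ∂ν)]
  exact integral_inner hu _

variable [IsProbabilityMeasure ν]

lemma MeasureTheory.MemLp.integral_prod_right_two [SFinite μ] {F : α × β → E}
    (hF : MemLp F 2 (μ.prod ν)) : MemLp (fun x => ∫ y, F (x, y) ∂ν) 2 μ := by
  have hsq := hF.integrable_norm_sq
  refine (memLp_two_iff_integrable_sq_norm hF.1.integral_prod_right').2
    (hsq.integral_prod_left.mono' (hF.1.integral_prod_right'.norm.pow 2) ?_)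
  filter_upwards [hF.1.prodMk_left, hsq.prod_right_ae] with x hmeas hint
  rw [Real.norm_of_nonneg (sq_nonneg _)]
  exact norm_integral_sq_le_integral_norm_sq ((memLp_two_iff_integrable_sq_norm hmeas).2 hint)

lemma integral_inner_comp_fst_eq [IsFiniteMeasure μ] {F : α × β → E} {u : α → E} (hF : MemLp F 2 (μ.prod ν))
    (hu : MemLp u 2 μ) :
    ∫ z, ⟪F z, u z.1⟫ ∂(μ.prod ν) = ∫ x, ⟪∫ y, F (x, y) ∂ν, u x⟫ ∂μ := by
  have hint : Integrable (fun z => ⟪F z, u z.1⟫) (μ.prod ν) :=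
    hF.integrable_inner (hu.comp_measurePreserving measurePreserving_fst)
  rw [integral_prod _ hint]
  refine integral_congr_ae ?_
  filter_upwards [(hF.integrable one_le_two).prod_right_ae] with x hx
  simp_rw [real_inner_comm (u x)]
  exact integral_inner hx _

lemma integral_inner_share_fst [IsFiniteMeasure μ] {F : α × β → E}
    (hF : MemLp F 2 (μ.prod ν)) :
    ∫ t, ⟪F (t.1, t.2.1), F (t.1, t.2.2)⟫ ∂(μ.prod (ν.prod ν))
      = ∫ x, ‖∫ y, F (x, y) ∂ν‖ ^ 2 ∂μ := by
  have hint : Integrable (fun t => ⟪F (t.1, t.2.1), F (t.1, t.2.2)⟫) (μ.prod (ν.prod ν)) :=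
    (hF.comp_measurePreserving ((MeasurePreserving.id μ).prod measurePreserving_fst))
      |>.integrable_inner
        (hF.comp_measurePreserving ((MeasurePreserving.id μ).prod measurePreserving_snd))
  rw [integral_prod _ hint]
  refine integral_congr_ae ?_
  filter_upwards [(hF.integrable one_le_two).prod_right_ae] with x hx
  rw [← real_inner_self_eq_norm_sq]
  exact integral_inner_prod (u := fun y => F (x, y)) hx hx

lemma two_mul_integral_norm_section_le [IsProbabilityMeasure μ] {F : α × α → E}
    (hF : MemLp F 2 (μ.prod μ)) (hsymm : ∀ x y, F (x, y) = F (y, x))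
    (hF₀ : ∫ z, F z ∂(μ.prod μ) = 0) :
    2 * ∫ x, ‖∫ y, F (x, y) ∂μ‖ ^ 2 ∂μ ≤ ∫ z, ‖F z‖ ^ 2 ∂(μ.prod μ) := by
  set D := fun x => ∫ y, F (x, y) ∂μ
  have hD : MemLp D 2 μ := hF.integral_prod_right_two
  have hD₁ : MemLp (fun z : α × α => D z.1) 2 (μ.prod μ) :=
    hD.comp_measurePreserving measurePreserving_fst
  have hD₂ : MemLp (fun z : α × α => D z.2) 2 (μ.prod μ) :=
    hD.comp_measurePreserving measurePreserving_snd
  have hFD₁ : ∫ z, ⟪F z, D z.1⟫ ∂(μ.prod μ) = ∫ x, ‖D x‖ ^ 2 ∂μ := by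
    rw [integral_inner_comp_fst_eq hF hD]
    exact integral_congr_ae (ae_of_all _ fun x => real_inner_self_eq_norm_sq _)
  have hFD₂ : ∫ z, ⟪F z, D z.2⟫ ∂(μ.prod μ) = ∫ x, ‖D x‖ ^ 2 ∂μ := by
    rw [← integral_prod_swap]
    simpa only [Prod.fst_swap, Prod.snd_swap, Prod.swap, hsymm] using hFD₁
  have hD₁D₂ : ∫ z, ⟪D z.1, D z.2⟫ ∂(μ.prod μ) = 0 := by
    rw [integral_inner_prod (hD.integrable one_le_two) (hD.integrable one_le_two),
      ← integral_prod _ (hF.integrable one_le_two), hF₀, inner_zero_left]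
  have hmarg₁ : ∫ z, ‖D z.1‖ ^ 2 ∂(μ.prod μ) = ∫ x, ‖D x‖ ^ 2 ∂μ := by
    simp [integral_fun_fst (fun x => ‖D x‖ ^ 2)]
  have hmarg₂ : ∫ z, ‖D z.2‖ ^ 2 ∂(μ.prod μ) = ∫ x, ‖D x‖ ^ 2 ∂μ := by
    simp [integral_fun_snd (fun x => ‖D x‖ ^ 2)]
  -- `D x + D y` is the orthogonal projection of `F (x, y)` onto the additive kernels, so the
  -- residual has nonnegative squared norm `∫ ‖F‖² - 2 ∫ ‖D‖²`.
  have hw : MemLp (fun z : α × α => D z.1 + D z.2) 2 (μ.prod μ) := hD₁.add hD₂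
  have hproj := integral_norm_sub_sq hF hw
  rw [integral_inner_add_right hF hD₁ hD₂, integral_norm_add_sq hD₁ hD₂, hFD₁, hFD₂, hD₁D₂,
    hmarg₁, hmarg₂] at hproj
  have : 0 ≤ ∫ z, ‖F z - (D z.1 + D z.2)‖ ^ 2 ∂(μ.prod μ) := integral_nonneg fun _ => sq_nonneg _
  linarith

end Product

section Pairs

def upperPairs (n : ℕ) : Finset (Fin n × Fin n) := univ.filter fun p => p.1 < p.2

/-- `∑ i, pairMult p i * pairMult q i` is the number of indices shared by the pairs `p` and `q`;
double counting through it replaces a case analysis on how pairs overlap. -/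
def pairMult {ι : Type*} [DecidableEq ι] (p : ι × ι) (i : ι) : ℝ :=
  (if p.1 = i then 1 else 0) + (if p.2 = i then 1 else 0)

lemma sum_pairMult_mul {ι : Type*} [Fintype ι] [DecidableEq ι] (p : ι × ι) (f : ι → ℝ) :
    ∑ i, pairMult p i * f i = f p.1 + f p.2 := by
  simp [pairMult, add_mul, sum_add_distrib]

lemma sum_upperPairs_pairMult {n : ℕ} (i : Fin n) :
    ∑ p ∈ upperPairs n, pairMult p i = n - 1 := by
  have hsplit : ∀ a b : Fin n, (if a < b then pairMult (a, b) i else 0)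
      = (if a = i then 1 else 0) * (if i < b then 1 else 0)
        + (if b = i then 1 else 0) * (if a < i then 1 else 0) := by
    intro a b
    simp only [pairMult]
    split_ifs <;> simp_all
  rw [upperPairs, sum_filter, Fintype.sum_prod_type]
  simp only [hsplit, sum_add_distrib, ← mul_sum]
  simp only [boole_mul, sum_ite_eq', mem_univ, if_true, sum_boole]
  have hi := i.isLt
  rw [filter_lt_eq_Ioi, filter_gt_eq_Iio, Fin.card_Ioi, Fin.card_Iio, Nat.cast_sub (by omega),
    Nat.cast_sub (by omega)]
  ring

lemma card_upperPairs (n : ℕ) : (#(upperPairs n) : ℝ) = n * (n - 1) / 2 := by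
  have h := sum_comm (s := upperPairs n) (t := univ) (f := fun p i => pairMult p i)
  have h2 : ∀ p : Fin n × Fin n, ∑ i, pairMult p i = 2 := fun p => by
    simpa [one_add_one_eq_two] using sum_pairMult_mul p 1
  simp only [sum_upperPairs_pairMult, h2, sum_const, card_univ, Fintype.card_fin,
    nsmul_eq_mul] at h
  linarith

lemma sum_upperPairs_overlap (n : ℕ) :
    ∑ p ∈ upperPairs n, ∑ q ∈ upperPairs n, ∑ i, pairMult p i * pairMult q i
      = n * (n - 1) ^ 2 := by
  have : ∑ i : Fin n, (∑ p ∈ upperPairs n, pairMult p i) * (∑ q ∈ upperPairs n, pairMult q i)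
      = n * (n - 1) ^ 2 := by
    simp [sum_upperPairs_pairMult, sq]
  rw [← this]
  simp_rw [sum_mul_sum]
  conv_rhs => rw [sum_comm]
  refine sum_congr rfl fun p _ => ?_
  exact sum_comm

end Pairs

noncomputable def uStat {S E : Type*} [AddCommGroup E] [Module ℝ E] (n : ℕ) (K : S × S → E)
    (x : Fin n → S) : E :=
  ((2 : ℝ) / (n * (n - 1))) • ∑ p ∈ upperPairs n, K (x p.1, x p.2)

lemma uStat_sub_const {S E : Type*} [AddCommGroup E] [Module ℝ E] {n : ℕ} (hn : 2 ≤ n)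
    (K : S × S → E) (c : E) (x : Fin n → S) :
    uStat n K x - c = uStat n (fun z => K z - c) x := by
  have hpos : (0 : ℝ) < n * (n - 1) := by
    have : (2 : ℝ) ≤ n := by exact_mod_cast hn
    nlinarith
  rw [uStat, uStat, sum_sub_distrib, sum_const, smul_sub, ← Nat.cast_smul_eq_nsmul ℝ, smul_smul,
    card_upperPairs, show (2 : ℝ) / (n * (n - 1)) * (n * (n - 1) / 2) = 1 by
      rw [div_mul_div_comm, mul_comm 2, div_self (mul_pos hpos two_pos).ne'], one_smul]

section Sample

variable {Ω S E ι : Type*} [MeasurableSpace Ω] [MeasurableSpace S] {P : Measure Ω}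
  [IsProbabilityMeasure P] {μ : Measure S}

lemma ProbabilityTheory.IndepFun.measurePreserving_prodMk {β γ : Type*} [MeasurableSpace β]
    [MeasurableSpace γ] {f : Ω → β} {g : Ω → γ} {ν : Measure β} {ρ : Measure γ}
    (hfg : IndepFun f g P) (hf : MeasurePreserving f P ν) (hg : MeasurePreserving g P ρ) :
    MeasurePreserving (fun ω => (f ω, g ω)) P (ν.prod ρ) :=
  ⟨hf.measurable.prodMk hg.measurable, by
    rw [hfg.map_prod_eq_prod_map_map hf.aemeasurable hg.aemeasurable, hf.map_eq, hg.map_eq]⟩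

variable {X : ι → Ω → S}

lemma ProbabilityTheory.iIndepFun.measurePreserving_pair (hind : iIndepFun X P)
    (hX : ∀ i, MeasurePreserving (X i) P μ) {a b : ι} (hab : a ≠ b) :
    MeasurePreserving (fun ω => (X a ω, X b ω)) P (μ.prod μ) :=
  (hind.indepFun hab).measurePreserving_prodMk (hX a) (hX b)

lemma ProbabilityTheory.iIndepFun.measurePreserving_triple (hind : iIndepFun X P)
    (hX : ∀ i, MeasurePreserving (X i) P μ) {a b c : ι} (hab : a ≠ b) (hac : a ≠ c)
    (hbc : b ≠ c) :
    MeasurePreserving (fun ω => (X a ω, (X b ω, X c ω))) P (μ.prod (μ.prod μ)) :=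
  (hind.indepFun_prodMk (fun i => (hX i).measurable) b c a hab.symm hac.symm).symm
    |>.measurePreserving_prodMk (hX a) (hind.measurePreserving_pair hX hbc)

lemma ProbabilityTheory.iIndepFun.measurePreserving_pair_pair (hind : iIndepFun X P)
    (hX : ∀ i, MeasurePreserving (X i) P μ) {a b c d : ι} (hab : a ≠ b) (hcd : c ≠ d)
    (hac : a ≠ c) (had : a ≠ d) (hbc : b ≠ c) (hbd : b ≠ d) :
    MeasurePreserving (fun ω => ((X a ω, X b ω), (X c ω, X d ω))) P
      ((μ.prod μ).prod (μ.prod μ)) :=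
  (hind.indepFun_prodMk_prodMk (fun i => (hX i).measurable) a b c d hac had hbc hbd)
    |>.measurePreserving_prodMk (hind.measurePreserving_pair hX hab)
      (hind.measurePreserving_pair hX hcd)

variable [NormedAddCommGroup E] [InnerProductSpace ℝ E] {F : S × S → E}

lemma integral_inner_kernel_self (hind : iIndepFun X P) (hX : ∀ i, MeasurePreserving (X i) P μ)
    (hF : MemLp F 2 (μ.prod μ)) {a b : ι} (hab : a ≠ b) :
    ∫ ω, ⟪F (X a ω, X b ω), F (X a ω, X b ω)⟫ ∂P = ∫ z, ‖F z‖ ^ 2 ∂(μ.prod μ) := by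
  simp_rw [real_inner_self_eq_norm_sq]
  exact (hind.measurePreserving_pair hX hab).integral_comp_of_aestronglyMeasurable
    (hF.1.norm.pow 2)

variable [CompleteSpace E] [IsProbabilityMeasure μ]

lemma integral_inner_kernel_of_share_one (hind : iIndepFun X P)
    (hX : ∀ i, MeasurePreserving (X i) P μ) (hF : MemLp F 2 (μ.prod μ)) {a b c : ι}
    (hab : a ≠ b) (hac : a ≠ c) (hbc : b ≠ c) :
    ∫ ω, ⟪F (X a ω, X b ω), F (X a ω, X c ω)⟫ ∂P = ∫ x, ‖∫ y, F (x, y) ∂μ‖ ^ 2 ∂μ := by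
  rw [← integral_inner_share_fst hF]
  refine (hind.measurePreserving_triple hX hab hac hbc).integral_comp_of_aestronglyMeasurable
    (g := fun t => ⟪F (t.1, t.2.1), F (t.1, t.2.2)⟫) ?_
  exact (hF.1.comp_measurePreserving ((MeasurePreserving.id μ).prod measurePreserving_fst)).inner
    (hF.1.comp_measurePreserving ((MeasurePreserving.id μ).prod measurePreserving_snd))

lemma integral_inner_kernel_of_disjoint (hind : iIndepFun X P)
    (hX : ∀ i, MeasurePreserving (X i) P μ) (hF : MemLp F 2 (μ.prod μ)) {a b c d : ι}
    (hab : a ≠ b) (hcd : c ≠ d) (hac : a ≠ c) (had : a ≠ d) (hbc : b ≠ c) (hbd : b ≠ d) :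
    ∫ ω, ⟪F (X a ω, X b ω), F (X c ω, X d ω)⟫ ∂P = ‖∫ z, F z ∂(μ.prod μ)‖ ^ 2 := by
  have hFi := hF.integrable one_le_two
  rw [← real_inner_self_eq_norm_sq, ← integral_inner_prod hFi hFi]
  exact (hind.measurePreserving_pair_pair hX hab hcd hac had hbc hbd)
    |>.integral_comp_of_aestronglyMeasurable (g := fun t => ⟪F t.1, F t.2⟫)
      ((hF.1.comp_measurePreserving measurePreserving_fst).inner
        (hF.1.comp_measurePreserving measurePreserving_snd))

lemma integral_inner_kernel_of_lt [LinearOrder ι] (hind : iIndepFun X P)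
    (hX : ∀ i, MeasurePreserving (X i) P μ) (hF : MemLp F 2 (μ.prod μ))
    (hsymm : ∀ x y, F (x, y) = F (y, x)) (hF₀ : ∫ z, F z ∂(μ.prod μ) = 0) {p q : ι × ι}
    (hp : p.1 < p.2) (hq : q.1 < q.2) :
    ∫ ω, ⟪F (X p.1 ω, X p.2 ω), F (X q.1 ω, X q.2 ω)⟫ ∂P
      = (∫ x, ‖∫ y, F (x, y) ∂μ‖ ^ 2 ∂μ) * (pairMult q p.1 + pairMult q p.2)
        + (∫ z, ‖F z‖ ^ 2 ∂(μ.prod μ) - 2 * ∫ x, ‖∫ y, F (x, y) ∂μ‖ ^ 2 ∂μ)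
          * (if p = q then 1 else 0) := by
  obtain ⟨a, b⟩ := p
  obtain ⟨c, d⟩ := q
  dsimp only at hp hq ⊢
  rcases eq_or_ne a c with rfl | hac
  · rcases eq_or_ne b d with rfl | hbd
    · rw [integral_inner_kernel_self hind hX hF hp.ne]
      simp [pairMult, hp.ne, hp.ne']
      ring
    · rw [integral_inner_kernel_of_share_one hind hX hF hp.ne hq.ne hbd]
      simp [pairMult, hp.ne, hq.ne', hbd, hbd.symm]
  rcases eq_or_ne b d with rfl | hbd
  · simp_rw [hsymm (X a _), hsymm (X c _)]
    rw [integral_inner_kernel_of_share_one hind hX hF hp.ne' hq.ne' hac]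
    simp [pairMult, hp.ne', hq.ne, hac, hac.symm]
  rcases eq_or_ne a d with rfl | had
  · simp_rw [hsymm (X c _)]
    rw [integral_inner_kernel_of_share_one hind hX hF hp.ne hq.ne' (hq.trans hp).ne']
    simp [pairMult, hp.ne, hq.ne, hac, hbd, (hq.trans hp).ne]
  rcases eq_or_ne b c with rfl | hbc
  · simp_rw [hsymm (X a _)]
    rw [integral_inner_kernel_of_share_one hind hX hF hp.ne' hq.ne (hp.trans hq).ne]
    simp [pairMult, hp.ne, hq.ne, hac.symm, hbd.symm, had.symm]
  rw [integral_inner_kernel_of_disjoint hind hX hF hp.ne hq.ne hac had hbc hbd, hF₀]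
  simp [pairMult, hac, hac.symm, hbd, hbd.symm, had.symm, hbc.symm]

lemma integral_norm_uStat_sq {n : ℕ} {X : Fin n → Ω → S} (hind : iIndepFun X P)
    (hX : ∀ i, MeasurePreserving (X i) P μ) (hF : MemLp F 2 (μ.prod μ))
    (hsymm : ∀ x y, F (x, y) = F (y, x)) (hF₀ : ∫ z, F z ∂(μ.prod μ) = 0) :
    ∫ ω, ‖uStat n F (X · ω)‖ ^ 2 ∂P
      = 2 / (n * (n - 1)) * (∫ z, ‖F z‖ ^ 2 ∂(μ.prod μ)
          + 2 * (n - 2) * ∫ x, ‖∫ y, F (x, y) ∂μ‖ ^ 2 ∂μ) := by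
  have hlt : ∀ p ∈ upperPairs n, p.1 < p.2 := fun p hp => (mem_filter.1 hp).2
  have hov : ∀ p q : Fin n × Fin n, pairMult q p.1 + pairMult q p.2
      = ∑ i, pairMult p i * pairMult q i := fun p q => (sum_pairMult_mul p (pairMult q)).symm
  simp_rw [uStat, norm_smul, mul_pow, integral_const_mul]
  rw [integral_norm_sum_sq (f := fun p ω => F (X p.1 ω, X p.2 ω)) _ fun p hp =>
      hF.comp_measurePreserving (hind.measurePreserving_pair hX (hlt p hp).ne),
    sum_congr rfl fun p hp => sum_congr rfl fun q hq =>
      integral_inner_kernel_of_lt hind hX hF hsymm hF₀ (hlt p hp) (hlt q hq)]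
  simp only [hov, sum_add_distrib, ← mul_sum, mul_boole, sum_ite_eq, sum_upperPairs_overlap,
    sum_ite_mem, inter_self, sum_const, nsmul_eq_mul, card_upperPairs, Real.norm_eq_abs, sq_abs]
  rcases lt_or_ge n 2 with hn | hn
  · interval_cases n <;> simp
  · have : (2 : ℝ) ≤ n := by exact_mod_cast hn
    field_simp
    ring

theorem uStat_mse_bounds {n : ℕ} (hn : 2 ≤ n) {X : Fin n → Ω → S} (hind : iIndepFun X P)
    (hX : ∀ i, MeasurePreserving (X i) P μ) {K : S × S → E} (hK : MemLp K 2 (μ.prod μ))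
    (hsymm : ∀ x y, K (x, y) = K (y, x)) :
    4 * (∫ x, ‖∫ y, K (x, y) ∂μ - ∫ z, K z ∂(μ.prod μ)‖ ^ 2 ∂μ) / n
        ≤ ∫ ω, ‖uStat n K (X · ω) - ∫ z, K z ∂(μ.prod μ)‖ ^ 2 ∂P ∧
      ∫ ω, ‖uStat n K (X · ω) - ∫ z, K z ∂(μ.prod μ)‖ ^ 2 ∂P
        ≤ 4 * (∫ x, ‖∫ y, K (x, y) ∂μ - ∫ z, K z ∂(μ.prod μ)‖ ^ 2 ∂μ) / n
          + 2 * (∫ z, ‖K z‖ ^ 2 ∂(μ.prod μ)) / (n * (n - 1)) := by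
  set θ := ∫ z, K z ∂(μ.prod μ)
  set σ := ∫ x, ‖∫ y, K (x, y) ∂μ - θ‖ ^ 2 ∂μ
  set G := ∫ z, ‖K z - θ‖ ^ 2 ∂(μ.prod μ)
  have hKi := hK.integrable one_le_two
  have hF : MemLp (fun z => K z - θ) 2 (μ.prod μ) := hK.sub (memLp_const θ)
  have hFsymm : ∀ x y, K (x, y) - θ = K (y, x) - θ := fun x y => by rw [hsymm]
  have hF₀ : ∫ z, (K z - θ) ∂(μ.prod μ) = 0 := by simp [integral_sub hKi (integrable_const θ), θ]
  have hsection : ∫ x, ‖∫ y, (K (x, y) - θ) ∂μ‖ ^ 2 ∂μ = σ := by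
    refine integral_congr_ae ?_
    filter_upwards [hKi.prod_right_ae] with x hx
    simp [integral_sub hx (integrable_const θ)]
  have hHoeffding : 2 * σ ≤ G := hsection ▸ two_mul_integral_norm_section_le hF hFsymm hF₀
  have hGM : G ≤ ∫ z, ‖K z‖ ^ 2 ∂(μ.prod μ) := by
    have hG : G = ∫ z, ‖K z‖ ^ 2 ∂(μ.prod μ) - ‖θ‖ ^ 2 := integral_norm_sub_integral_sq hK
    linarith [sq_nonneg ‖θ‖]
  have hσ : 0 ≤ σ := integral_nonneg fun x => sq_nonneg _
  simp_rw [uStat_sub_const hn]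
  rw [integral_norm_uStat_sq hind hX hF hFsymm hF₀, hsection]
  have hn' : (2 : ℝ) ≤ n := by exact_mod_cast hn
  have hpos : (0 : ℝ) < n * (n - 1) := by nlinarith
  have hformula : 2 / (n * (n - 1)) * (G + 2 * (n - 2) * σ)
      = 4 * σ / n + 2 * (G - 2 * σ) / (n * (n - 1)) := by
    have : (n : ℝ) - 1 ≠ 0 := by linarith
    field_simp
    ring
  rw [hformula]
  constructor
  · have : 0 ≤ 2 * (G - 2 * σ) / (n * (n - 1)) := div_nonneg (by linarith) hpos.le
    linarith
  · gcongr
    linarith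

end Sample

/-- Two-sided bound on the mean squared error of a second-order U-statistic
about its mean: the first-order Hoeffding term is the leading term and the
remainder is O(E‖h‖²/n²). -/
theorem U_statistic_MSE_two_sided_bound
    {Ω S : Type*} [MeasurableSpace Ω] [MeasurableSpace S] {d : ℕ}
    (P : Measure Ω) [IsProbabilityMeasure P]
    (n : ℕ) (hn : 2 ≤ n)
    (X : Fin n → Ω → S)
    (hmeas : ∀ i, Measurable (X i))
    (hindep : iIndepFun X P)
    (hident : ∀ i j, IdentDistrib (X i) (X j) P P)
    (h : S → S → EuclideanSpace ℝ (Fin d))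
    (hmeash : Measurable (Function.uncurry h))
    (hsymm : ∀ x y, h x y = h y x)
    (hsq : Integrable
      (fun ω => ‖h (X ⟨0, by omega⟩ ω) (X ⟨1, by omega⟩ ω)‖ ^ 2) P)
    (h₀ : EuclideanSpace ℝ (Fin d))
    (hh₀ : h₀ = ∫ ω, h (X ⟨0, by omega⟩ ω) (X ⟨1, by omega⟩ ω) ∂P)
    (h₁ : S → EuclideanSpace ℝ (Fin d))
    (hh₁ : ∀ x, h₁ x = ∫ ω, h x (X ⟨1, by omega⟩ ω) ∂P)
    (ζ₁ : S → EuclideanSpace ℝ (Fin d)) (hζ₁ : ∀ x, ζ₁ x = (2 : ℝ) • (h₁ x - h₀))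
    (U : Ω → EuclideanSpace ℝ (Fin d))
    (hU : ∀ ω, U ω = ((2 : ℝ) / ((n : ℝ) * ((n : ℝ) - 1))) •
      ∑ p ∈ univ.filter (fun p : Fin n × Fin n => p.1 < p.2),
        h (X p.1 ω) (X p.2 ω)) :
    (1 / (n : ℝ)) * (∫ ω, ‖ζ₁ (X ⟨0, by omega⟩ ω)‖ ^ 2 ∂P)
        ≤ ∫ ω, ‖U ω - h₀‖ ^ 2 ∂P ∧
    ∫ ω, ‖U ω - h₀‖ ^ 2 ∂P
        ≤ (1 / (n : ℝ)) * (∫ ω, ‖ζ₁ (X ⟨0, by omega⟩ ω)‖ ^ 2 ∂P)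
          + 32 * (∫ ω, ‖h (X ⟨0, by omega⟩ ω) (X ⟨1, by omega⟩ ω)‖ ^ 2 ∂P)
            / ((n : ℝ) * ((n : ℝ) - 1)) := by
  set i₀ : Fin n := ⟨0, by omega⟩
  set i₁ : Fin n := ⟨1, by omega⟩
  set μ := P.map (X i₀)
  have : IsProbabilityMeasure μ := Measure.isProbabilityMeasure_map (hmeas i₀).aemeasurable
  have hX : ∀ i, MeasurePreserving (X i) P μ := fun i => ⟨hmeas i, (hident i i₀).map_eq⟩
  have h₀₁ := hindep.measurePreserving_pair hX (show i₀ ≠ i₁ by simp [i₀, i₁, Fin.ext_iff])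
  set K : S × S → EuclideanSpace ℝ (Fin d) := Function.uncurry h
  have hKm : AEStronglyMeasurable K (μ.prod μ) := hmeash.aestronglyMeasurable
  have hM : ∫ ω, ‖h (X i₀ ω) (X i₁ ω)‖ ^ 2 ∂P = ∫ z, ‖K z‖ ^ 2 ∂(μ.prod μ) :=
    h₀₁.integral_comp_of_aestronglyMeasurable (hKm.norm.pow 2)
  have hK : MemLp K 2 (μ.prod μ) :=
    (memLp_two_iff_integrable_sq_norm hKm).2 ((h₀₁.integrable_comp (hKm.norm.pow 2)).1 hsq)
  have hθ : h₀ = ∫ z, K z ∂(μ.prod μ) := hh₀.trans (h₀₁.integral_comp_of_aestronglyMeasurable hKm)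
  have hh₁' : ∀ x, h₁ x = ∫ y, K (x, y) ∂μ := fun x => (hh₁ x).trans
    ((hX i₁).integral_comp_of_aestronglyMeasurable
      (hmeash.comp measurable_prodMk_left).aestronglyMeasurable)
  have hζ : ∫ ω, ‖ζ₁ (X i₀ ω)‖ ^ 2 ∂P
      = 4 * ∫ x, ‖∫ y, K (x, y) ∂μ - ∫ z, K z ∂(μ.prod μ)‖ ^ 2 ∂μ := by
    simp_rw [hζ₁, norm_smul, mul_pow, hh₁', ← hθ]
    rw [integral_const_mul, (hX i₀).integral_comp_of_aestronglyMeasurable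
      (g := fun x => ‖∫ y, K (x, y) ∂μ - h₀‖ ^ 2)
      ((hK.integral_prod_right_two.1.sub aestronglyMeasurable_const).norm.pow 2)]
    norm_num
  obtain ⟨hlow, hup⟩ := uStat_mse_bounds hn hindep hX hK fun x y => hsymm x y
  have hU' : ∀ ω, U ω = uStat n K (X · ω) := hU
  simp_rw [hU', hθ, hζ, hM]
  rw [one_div_mul_eq_div]
  refine ⟨hlow, hup.trans ?_⟩
  have hn' : (2 : ℝ) ≤ n := by exact_mod_cast hn
  gcongr
  · nlinarith
  · norm_num
end

section
/- Let W be a square-integrable random vector in ℝ^d and Z a bounded random real variable such that E[‖W‖² Z] = E[‖W‖²] · E[Z], and let V = E[Z]. If V ≠ 0 and E‖W‖² > 0, then the zero baseline is strictly worse than the mean baseline: E‖(Z − V) • W‖² < E‖Z • W‖². -/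
/-!
Pointwise, `‖(Z - b) • W‖² = ‖Z • W‖² - 2 b Z ‖W‖² + b² ‖W‖²`. Integrating and using that `Z` is
uncorrelated with `‖W‖²`, the baseline `b` lowers the second moment by `(2 b V - b²) E‖W‖²`, which
for `b = V` is `V² E‖W‖² > 0`.
-/

open MeasureTheory

section Baseline

variable {Ω E : Type*} [MeasurableSpace Ω] {μ : Measure Ω}
  [NormedAddCommGroup E] {W : Ω → E} {Z : Ω → ℝ}

lemma norm_smul_sq [NormedSpace ℝ E] (c : ℝ) (x : E) : ‖c • x‖ ^ 2 = c ^ 2 * ‖x‖ ^ 2 := by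
  rw [norm_smul, mul_pow, Real.norm_eq_abs, sq_abs]

lemma MeasureTheory.MemLp.integrable_mul_norm_sq_of_bdd (hW : MemLp W 2 μ) {g : Ω → ℝ}
    (hg : AEStronglyMeasurable g μ) {c : ℝ} (hgc : ∀ᵐ ω ∂μ, |g ω| ≤ c) :
    Integrable (fun ω => g ω * ‖W ω‖ ^ 2) μ :=
  (hW.integrable_norm_pow (p := 2) two_ne_zero).bdd_mul hg hgc

lemma integral_norm_sub_smul_sq [NormedSpace ℝ E]
    (hW : Integrable (fun ω => ‖W ω‖ ^ 2) μ)
    (hZW : Integrable (fun ω => Z ω * ‖W ω‖ ^ 2) μ)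
    (hZ2W : Integrable (fun ω => Z ω ^ 2 * ‖W ω‖ ^ 2) μ) (b : ℝ) :
    ∫ ω, ‖(Z ω - b) • W ω‖ ^ 2 ∂μ
      = ∫ ω, ‖Z ω • W ω‖ ^ 2 ∂μ - 2 * b * ∫ ω, Z ω * ‖W ω‖ ^ 2 ∂μ
        + b ^ 2 * ∫ ω, ‖W ω‖ ^ 2 ∂μ := by
  have hexpand : ∀ ω, ‖(Z ω - b) • W ω‖ ^ 2
      = Z ω ^ 2 * ‖W ω‖ ^ 2 - 2 * b * (Z ω * ‖W ω‖ ^ 2) + b ^ 2 * ‖W ω‖ ^ 2 := fun ω => by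
    rw [norm_smul_sq]; ring
  simp only [hexpand, norm_smul_sq]
  rw [integral_add (f := fun ω => Z ω ^ 2 * ‖W ω‖ ^ 2 - 2 * b * (Z ω * ‖W ω‖ ^ 2))
      (hZ2W.sub (hZW.const_mul _)) (hW.const_mul _),
    integral_sub hZ2W (hZW.const_mul _), integral_const_mul, integral_const_mul]

end Baseline

theorem zero_baseline_strictly_worse_general
    {Ω : Type*} [MeasurableSpace Ω] {d : ℕ}
    (ℙ : Measure Ω)
    (W : Ω → EuclideanSpace ℝ (Fin d)) (Z : Ω → ℝ)
    (hW : MemLp W 2 ℙ) (hZmeas : Measurable Z)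
    (hZbdd : ∃ c : ℝ, ∀ᵐ ω ∂ℙ, |Z ω| ≤ c)
    (huncorr : ∫ ω, ‖W ω‖ ^ 2 * Z ω ∂ℙ
      = (∫ ω, ‖W ω‖ ^ 2 ∂ℙ) * (∫ ω, Z ω ∂ℙ))
    (V : ℝ) (hV : V = ∫ ω, Z ω ∂ℙ)
    (hVne : V ≠ 0) (hWpos : 0 < ∫ ω, ‖W ω‖ ^ 2 ∂ℙ) :
    ∫ ω, ‖(Z ω - V) • W ω‖ ^ 2 ∂ℙ < ∫ ω, ‖Z ω • W ω‖ ^ 2 ∂ℙ := by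
  obtain ⟨c, hc⟩ := hZbdd
  have hZ2c : ∀ᵐ ω ∂ℙ, |Z ω ^ 2| ≤ c ^ 2 := hc.mono fun ω hω => by
    rw [abs_pow]; exact pow_le_pow_left₀ (abs_nonneg _) hω 2
  have hZW := hW.integrable_mul_norm_sq_of_bdd hZmeas.aestronglyMeasurable hc
  have hZ2W := hW.integrable_mul_norm_sq_of_bdd (hZmeas.pow_const 2).aestronglyMeasurable hZ2c
  have hEZW : ∫ ω, Z ω * ‖W ω‖ ^ 2 ∂ℙ = V * ∫ ω, ‖W ω‖ ^ 2 ∂ℙ := by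
    simp_rw [mul_comm (Z _)]; rw [huncorr, hV, mul_comm]
  rw [integral_norm_sub_smul_sq (hW.integrable_norm_pow (p := 2) two_ne_zero) hZW hZ2W, hEZW]
  linarith [mul_pos (sq_pos_of_ne_zero hVne) hWpos]

/-- The zero baseline is strictly worse than the mean baseline (strict
inequality part of Corollary 5 of the paper). -/
theorem zero_baseline_strictly_worse
    {Ω : Type*} [MeasurableSpace Ω] {d : ℕ}
    (ℙ : Measure Ω) [IsProbabilityMeasure ℙ]
    (W : Ω → EuclideanSpace ℝ (Fin d)) (Z : Ω → ℝ)
    (hW : MemLp W 2 ℙ) (hZmeas : Measurable Z)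
    (hZbdd : ∃ c : ℝ, ∀ᵐ ω ∂ℙ, |Z ω| ≤ c)
    (huncorr : ∫ ω, ‖W ω‖ ^ 2 * Z ω ∂ℙ
      = (∫ ω, ‖W ω‖ ^ 2 ∂ℙ) * (∫ ω, Z ω ∂ℙ))
    (V : ℝ) (hV : V = ∫ ω, Z ω ∂ℙ)
    (hVne : V ≠ 0) (hWpos : 0 < ∫ ω, ‖W ω‖ ^ 2 ∂ℙ) :
    ∫ ω, ‖(Z ω - V) • W ω‖ ^ 2 ∂ℙ < ∫ ω, ‖Z ω • W ω‖ ^ 2 ∂ℙ :=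
  zero_baseline_strictly_worse_general ℙ W Z hW hZmeas hZbdd huncorr V hV hVne hWpos
end

section
/- Let J : ℝ^d → ℝ be twice continuously differentiable, let μ > 0, and suppose the Polyak–Łojasiewicz condition holds: ‖∇J(θ)‖² ≥ 2μ (J(θ*) − J(θ)) for all θ ∈ ℝ^d, where θ* is a global maximizer of J. Let λ > 0 and let v be a unit vector that is an eigenvector of the Hessian of J at θ* with eigenvalue −λ (i.e., the second derivative bilinear form H of J at θ* satisfies H(v, u) = −λ ⟨v, u⟩ for all u ∈ ℝ^d). Then λ ≥ μ. -/
/-!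
At the maximizer the gradient vanishes, so along the line `θ* + t v` the derivative of `J`
grows like `t • D²J(θ*) v` and `J` drops like `t² D²J(θ*)(v, v) / 2`. Dividing the PL inequality
by `t²` and letting `t → 0` gives `-μ D²J(θ*)(v, v) ≤ ‖D²J(θ*) v‖²`, which for the eigenvector `v`
reads `μ λ ≤ λ²`.
-/

open scoped RealInnerProductSpace

open Filter Topology

theorem tendsto_sq_norm_div_sq_of_hasDerivAt_zero {F : Type*} [NormedAddCommGroup F]
    [NormedSpace ℝ F] {f : ℝ → F} {f' : F} (hf : HasDerivAt f f' 0) (h0 : f 0 = 0) :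
    Tendsto (fun t => ‖f t‖ ^ 2 / t ^ 2) (𝓝[≠] 0) (𝓝 (‖f'‖ ^ 2)) := by
  refine ((hasDerivAt_iff_tendsto_slope.mp hf).norm.pow 2).congr fun t => ?_
  rw [slope_def_module, h0, sub_zero, sub_zero, norm_smul, norm_inv, Real.norm_eq_abs,
    inv_mul_eq_div, div_pow, sq_abs]

theorem tendsto_sub_div_sq_of_hasDerivAt_zero {h h' : ℝ → ℝ} {a : ℝ}
    (hh : ∀ᶠ t in 𝓝 0, HasDerivAt h (h' t) t) (hh' : HasDerivAt h' a 0) (h'0 : h' 0 = 0) :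
    Tendsto (fun t => (h t - h 0) / t ^ 2) (𝓝[≠] 0) (𝓝 (a / 2)) := by
  refine HasDerivAt.lhopital_zero_nhdsNE (f' := h') (g' := fun t => 2 * t)
    ((hh.filter_mono nhdsWithin_le_nhds).mono fun t ht => ht.sub_const _)
    (Eventually.of_forall fun t => by simpa using hasDerivAt_pow 2 t)
    (eventually_mem_nhdsWithin.mono fun t ht => mul_ne_zero two_ne_zero ht)
    ?_ ?_ ?_
  · simpa using (hh.self_of_nhds.continuousAt.tendsto.sub_const (h 0)).mono_left
      (nhdsWithin_le_nhds (s := {0}ᶜ))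
  · exact ((continuous_pow 2).tendsto' 0 0 (by simp)).mono_left nhdsWithin_le_nhds
  · refine ((hasDerivAt_iff_tendsto_slope.mp hh').div_const 2).congr fun t => ?_
    rw [slope_def_field, h'0, sub_zero, sub_zero, div_div, mul_comm]

section Line

variable {E : Type*} [NormedAddCommGroup E] [NormedSpace ℝ E] {J : E → ℝ} {x : E}

theorem hasDerivAt_add_smul (x v : E) (t : ℝ) : HasDerivAt (fun t : ℝ => x + t • v) v t := by
  simpa using ((hasDerivAt_id t).smul_const v).const_add x

theorem tendsto_sq_norm_fderiv_div_sq_of_fderiv_eq_zero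
    (hJ : DifferentiableAt ℝ (fderiv ℝ J) x) (hx : fderiv ℝ J x = 0) (v : E) :
    Tendsto (fun t : ℝ => ‖fderiv ℝ J (x + t • v)‖ ^ 2 / t ^ 2) (𝓝[≠] 0)
      (𝓝 (‖fderiv ℝ (fderiv ℝ J) x v‖ ^ 2)) := by
  refine tendsto_sq_norm_div_sq_of_hasDerivAt_zero ?_ (by simpa using hx)
  exact (by simpa using hJ.hasFDerivAt : HasFDerivAt _ _ (x + (0 : ℝ) • v)).comp_hasDerivAt 0
    (hasDerivAt_add_smul x v 0)

theorem tendsto_sub_div_sq_of_fderiv_eq_zero (hJ : Differentiable ℝ J)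
    (hJ' : DifferentiableAt ℝ (fderiv ℝ J) x) (hx : fderiv ℝ J x = 0) (v : E) :
    Tendsto (fun t : ℝ => (J (x + t • v) - J x) / t ^ 2) (𝓝[≠] 0)
      (𝓝 (fderiv ℝ (fderiv ℝ J) x v v / 2)) := by
  have hJline (t : ℝ) : HasDerivAt (fun t : ℝ => J (x + t • v)) (fderiv ℝ J (x + t • v) v) t :=
    (hJ _).hasFDerivAt.comp_hasDerivAt t (hasDerivAt_add_smul x v t)
  have hJ'line : HasDerivAt (fun t : ℝ => fderiv ℝ J (x + t • v)) (fderiv ℝ (fderiv ℝ J) x v) 0 :=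
    (by simpa using hJ'.hasFDerivAt : HasFDerivAt _ _ (x + (0 : ℝ) • v)).comp_hasDerivAt 0
      (hasDerivAt_add_smul x v 0)
  simpa using tendsto_sub_div_sq_of_hasDerivAt_zero (Eventually.of_forall hJline)
    (hJ'line.clm_apply (hasDerivAt_const 0 v)) (by simp [hx])

end Line

theorem neg_mul_fderiv_fderiv_apply_self_le_sq_norm_of_pl {E : Type*} [NormedAddCommGroup E]
    [NormedSpace ℝ E] {J : E → ℝ} {x : E} {μ : ℝ} (hJ : ContDiff ℝ 2 J) (hmax : IsLocalMax J x)
    (hPL : ∀ y, 2 * μ * (J x - J y) ≤ ‖fderiv ℝ J y‖ ^ 2) (v : E) :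
    -(μ * fderiv ℝ (fderiv ℝ J) x v v) ≤ ‖fderiv ℝ (fderiv ℝ J) x v‖ ^ 2 := by
  have hJ₁ : Differentiable ℝ J := hJ.differentiable (by norm_num)
  have hJ₂ : DifferentiableAt ℝ (fderiv ℝ J) x :=
    (hJ.fderiv_right (m := 1) (by norm_num)).differentiable (by norm_num) x
  have hx : fderiv ℝ J x = 0 := hmax.fderiv_eq_zero
  have hdecrease := (tendsto_sub_div_sq_of_fderiv_eq_zero hJ₁ hJ₂ hx v).const_mul (-(2 * μ))
  have hslope := tendsto_sq_norm_fderiv_div_sq_of_fderiv_eq_zero hJ₂ hx v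
  rw [show -(2 * μ) * (fderiv ℝ (fderiv ℝ J) x v v / 2) = -(μ * fderiv ℝ (fderiv ℝ J) x v v) by
    ring] at hdecrease
  refine le_of_tendsto_of_tendsto hdecrease hslope
    (eventually_mem_nhdsWithin.mono fun t ht => ?_)
  calc -(2 * μ) * ((J (x + t • v) - J x) / t ^ 2) = 2 * μ * (J x - J (x + t • v)) / t ^ 2 := by
        ring
    _ ≤ ‖fderiv ℝ J (x + t • v)‖ ^ 2 / t ^ 2 := by gcongr; exact hPL _

theorem norm_eq_of_forall_apply_eq_mul_inner {E : Type*} [NormedAddCommGroup E]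
    [InnerProductSpace ℝ E] [CompleteSpace E] {L : E →L[ℝ] ℝ} {c : ℝ} {v : E}
    (hL : ∀ u, L u = c * ⟪v, u⟫) : ‖L‖ = |c| * ‖v‖ := by
  have : L = InnerProductSpace.toDual ℝ E (c • v) := by
    ext u
    simp [hL]
  rw [this, LinearIsometryEquiv.norm_map, norm_smul, Real.norm_eq_abs]

theorem PL_eigenvalue_lower_bound_general {d : ℕ}
    (J : EuclideanSpace ℝ (Fin d) → ℝ) (hJ : ContDiff ℝ 2 J)
    (μ : ℝ)
    (θstar : EuclideanSpace ℝ (Fin d))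
    (hmax : ∀ θ, J θ ≤ J θstar)
    (hPL : ∀ θ, ‖gradient J θ‖ ^ 2 ≥ 2 * μ * (J θstar - J θ))
    (lam : ℝ) (hlam : 0 < lam)
    (v : EuclideanSpace ℝ (Fin d)) (hv : ‖v‖ = 1)
    (heig : ∀ u, fderiv ℝ (fun θ => fderiv ℝ J θ) θstar v u = -lam * ⟪v, u⟫) :
    μ ≤ lam := by
  have hPL' (θ) : 2 * μ * (J θstar - J θ) ≤ ‖fderiv ℝ J θ‖ ^ 2 := by
    simpa [gradient, LinearIsometryEquiv.norm_map] using hPL θ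
  have key := neg_mul_fderiv_fderiv_apply_self_le_sq_norm_of_pl hJ (.of_forall hmax) hPL' v
  have hnorm : ‖fderiv ℝ (fderiv ℝ J) θstar v‖ = lam := by
    rw [norm_eq_of_forall_apply_eq_mul_inner heig, hv, abs_neg, abs_of_pos hlam, mul_one]
  have hvv : fderiv ℝ (fderiv ℝ J) θstar v v = -lam := by
    rw [heig, real_inner_self_eq_norm_sq, hv]; ring
  rw [hnorm, hvv] at key
  nlinarith

/-- First assertion of Lemma B.3 of the paper: under the PL condition with
constant μ, every positive eigenvalue of the negative Hessian at a global
maximizer is at least μ. -/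
theorem PL_eigenvalue_lower_bound {d : ℕ}
    (J : EuclideanSpace ℝ (Fin d) → ℝ) (hJ : ContDiff ℝ 2 J)
    (μ : ℝ) (hμ : 0 < μ)
    (θstar : EuclideanSpace ℝ (Fin d))
    (hmax : ∀ θ, J θ ≤ J θstar)
    (hPL : ∀ θ, ‖gradient J θ‖ ^ 2 ≥ 2 * μ * (J θstar - J θ))
    (lam : ℝ) (hlam : 0 < lam)
    (v : EuclideanSpace ℝ (Fin d)) (hv : ‖v‖ = 1)
    (heig : ∀ u, fderiv ℝ (fun θ => fderiv ℝ J θ) θstar v u = -lam * ⟪v, u⟫) :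
    μ ≤ lam :=
  PL_eigenvalue_lower_bound_general J hJ μ θstar hmax hPL lam hlam v hv heig
end

section
/- Let J : ℝ^d → ℝ be twice continuously differentiable and let Θ* ⊆ ℝ^d be a nonempty convex set such that every θ* ∈ Θ* is a global maximizer of J. Suppose there exist an integer r ≥ 1, a d × r real matrix Q with orthonormal columns (QᵀQ = I_r), and positive reals λ₁, …, λ_r such that at every θ* ∈ Θ* the Hessian quadratic form of J satisfies uᵀ H(θ*) u = − ∑_{k=1}^r λ_k (Qᵀu)_k² for all u ∈ ℝ^d. Then the map θ ↦ Qᵀθ is constant on Θ*: for all θ₁*, θ₂* ∈ Θ*, Qᵀθ₁* = Qᵀθ₂*. -/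
/-!
All maximizers share the same value of `J`, and by convexity the line through the midpoint of
`θ₁, θ₂` in the direction `θ₂ - θ₁` stays among them near the midpoint, so `J` is constant there.
Hence the second derivative of `J` vanishes there in that direction, and the Hessian
identity forces `∑ λₖ ⟪qₖ, θ₂ - θ₁⟫² = 0`, i.e. every `⟪qₖ, θ₂ - θ₁⟫` vanishes.
-/

open scoped RealInnerProductSpace Topology
open Filter

section LineConstant

variable {𝕜 E F : Type*} [NontriviallyNormedField 𝕜]
  [NormedAddCommGroup E] [NormedSpace 𝕜 E] [NormedAddCommGroup F] [NormedSpace 𝕜 F]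
  {f : E → F} {x u : E} {c : F}

theorem fderiv_apply_eq_zero_of_eventuallyEq_const_on_line (hf : DifferentiableAt 𝕜 f x)
    (h : (fun t : 𝕜 => f (x + t • u)) =ᶠ[𝓝 0] fun _ => c) : fderiv 𝕜 f x u = 0 := by
  rw [← hf.lineDeriv_eq_fderiv, lineDeriv, h.deriv_eq, deriv_const]

theorem eventuallyEq_zero_fderiv_apply_of_eventuallyEq_const_on_line (hf : Differentiable 𝕜 f)
    (h : (fun t : 𝕜 => f (x + t • u)) =ᶠ[𝓝 0] fun _ => c) :
    (fun t : 𝕜 => fderiv 𝕜 f (x + t • u) u) =ᶠ[𝓝 0] fun _ => 0 := by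
  filter_upwards [h.eventually_nhds] with t ht
  refine fderiv_apply_eq_zero_of_eventuallyEq_const_on_line (c := c) (hf _) ?_
  have hshift : Tendsto (t + ·) (𝓝 (0 : 𝕜)) (𝓝 t) :=
    (continuous_const_add t).tendsto' 0 t (add_zero t)
  filter_upwards [hshift.eventually ht] with s hs
  rwa [add_assoc, ← add_smul]

theorem fderiv_fderiv_apply_eq_zero_of_eventuallyEq_const_on_line (hf : ContDiff 𝕜 2 f)
    (h : (fun t : 𝕜 => f (x + t • u)) =ᶠ[𝓝 0] fun _ => c) :
    fderiv 𝕜 (fderiv 𝕜 f) x u u = 0 := by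
  have hf' : Differentiable 𝕜 (fderiv 𝕜 f) :=
    (hf.fderiv_right (m := 1) (by norm_num)).differentiable (by norm_num)
  have hdiff : DifferentiableAt 𝕜 (fun y => fderiv 𝕜 f y u) x :=
    (hf' x).clm_apply (differentiableAt_const u)
  rw [← fderiv_apply_eq_zero_of_eventuallyEq_const_on_line hdiff
    (eventuallyEq_zero_fderiv_apply_of_eventuallyEq_const_on_line
      (hf.differentiable (by norm_num)) h)]
  simp [fderiv_clm_apply (hf' x) (differentiableAt_const u)]

end LineConstant

theorem Convex.eventually_midpoint_add_smul_sub_mem {E : Type*} [AddCommGroup E] [Module ℝ E]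
    {s : Set E} (hs : Convex ℝ s) {a b : E} (ha : a ∈ s) (hb : b ∈ s) :
    ∀ᶠ t in 𝓝 (0 : ℝ), midpoint ℝ a b + t • (b - a) ∈ s := by
  filter_upwards [Ioo_mem_nhds (by norm_num : -(1 / 2 : ℝ) < 0) (by norm_num : (0 : ℝ) < 1 / 2)]
    with t ht
  have hline : midpoint ℝ a b + t • (b - a) = (1 / 2 - t) • a + (1 / 2 + t) • b := by
    rw [midpoint_eq_smul_add, invOf_eq_inv]
    module
  rw [hline]
  exact hs ha hb (by linarith [ht.2]) (by linarith [ht.1]) (by ring)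

theorem eq_zero_of_sum_mul_sq_eq_zero {ι : Type*} [Fintype ι] {w a : ι → ℝ} (hw : ∀ k, 0 < w k)
    (h : ∑ k, w k * a k ^ 2 = 0) (k : ι) : a k = 0 := by
  have hterm := (Finset.sum_eq_zero_iff_of_nonneg fun j _ =>
    mul_nonneg (hw j).le (sq_nonneg (a j))).mp h k (Finset.mem_univ k)
  exact pow_eq_zero_iff two_ne_zero |>.mp ((mul_eq_zero.mp hterm).resolve_left (hw k).ne')

theorem projected_optimal_set_singleton_general {d : ℕ}
    (J : EuclideanSpace ℝ (Fin d) → ℝ) (hJ : ContDiff ℝ 2 J)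
    (Θstar : Set (EuclideanSpace ℝ (Fin d)))
    (hconv : Convex ℝ Θstar)
    (hmax : ∀ θstar ∈ Θstar, ∀ θ, J θ ≤ J θstar)
    (r : ℕ)
    (q : Fin r → EuclideanSpace ℝ (Fin d))
    (lam : Fin r → ℝ) (hlam : ∀ k, 0 < lam k)
    (hHess : ∀ θstar ∈ Θstar, ∀ u,
      fderiv ℝ (fun θ => fderiv ℝ J θ) θstar u u
        = -∑ k, lam k * ⟪q k, u⟫ ^ 2) :
    ∀ θ₁ ∈ Θstar, ∀ θ₂ ∈ Θstar, ∀ k, ⟪q k, θ₁⟫ = ⟪q k, θ₂⟫ := by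
  intro θ₁ hθ₁ θ₂ hθ₂ k
  set m := midpoint ℝ θ₁ θ₂
  have hm : m ∈ Θstar := hconv.midpoint_mem hθ₁ hθ₂
  have hline : (fun t : ℝ => J (m + t • (θ₂ - θ₁))) =ᶠ[𝓝 0] fun _ => J m := by
    filter_upwards [hconv.eventually_midpoint_add_smul_sub_mem hθ₁ hθ₂] with t ht
    exact le_antisymm (hmax m hm _) (hmax _ ht m)
  have hsum : ∑ j, lam j * ⟪q j, θ₂ - θ₁⟫ ^ 2 = 0 := by
    have := hHess m hm (θ₂ - θ₁)
    rw [fderiv_fderiv_apply_eq_zero_of_eventuallyEq_const_on_line hJ hline] at this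
    linarith
  have hk := eq_zero_of_sum_mul_sq_eq_zero hlam hsum k
  rw [inner_sub_right, sub_eq_zero] at hk
  exact hk.symm

/-- Lemma B.2 of the paper: under the shared-rank Hessian structure, the
projection of the optimal set onto the identifiable subspace (spanned by the
orthonormal columns q of Q) is a single point. -/
theorem projected_optimal_set_singleton {d : ℕ}
    (J : EuclideanSpace ℝ (Fin d) → ℝ) (hJ : ContDiff ℝ 2 J)
    (Θstar : Set (EuclideanSpace ℝ (Fin d)))
    (hne : Θstar.Nonempty) (hconv : Convex ℝ Θstar)
    (hmax : ∀ θstar ∈ Θstar, ∀ θ, J θ ≤ J θstar)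
    (r : ℕ) (hr : 1 ≤ r)
    (q : Fin r → EuclideanSpace ℝ (Fin d)) (hq : Orthonormal ℝ q)
    (lam : Fin r → ℝ) (hlam : ∀ k, 0 < lam k)
    (hHess : ∀ θstar ∈ Θstar, ∀ u,
      fderiv ℝ (fun θ => fderiv ℝ J θ) θstar u u
        = -∑ k, lam k * ⟪q k, u⟫ ^ 2) :
    ∀ θ₁ ∈ Θstar, ∀ θ₂ ∈ Θstar, ∀ k, ⟪q k, θ₁⟫ = ⟪q k, θ₂⟫ :=
  projected_optimal_set_singleton_general J hJ Θstar hconv hmax r q lam hlam hHess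
end

section
/- Let μ, L, M, β, ā be reals with 0 < μ ≤ L, M ≥ 0, ā > 0 and β > 1/(2μ), and let (a_n)_{n ≥ 1} be a sequence with 0 ≤ a_n ≤ ā satisfying a_{n+1} ≤ (1 − 2μβ/n + μLβ²/n²) a_n + Lβ²M/(2n²) for all n ≥ 1. Then for every ε > 0 there exists a constant c > 0, depending only on (β, μ, L, M, ā, ε), such that a_n ≤ max{ (1+ε) L β² M / ((4μβ − 2) n), c/n } for all n ≥ 1. -/
/-!
Write the recursion as `a (n+1) ≤ (1 - A/n + B/n²) a n + C/n²` with `A = 2μβ > 1`. The bound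
`a n ≤ D / n` propagates from `n` to `n + 1` as soon as `C n + B D ≤ (A - 1) D n`. Taking
`D ≥ (1 + ε) C / (A - 1)`, this holds once `n ≥ B (1 + ε) / ((A - 1) ε)`: the `C` term uses a
fraction `1 / (1 + ε)` of the margin `(A - 1) D n`, the `B D` term the rest. Below that threshold
`N` the a priori bound `a n ≤ ā ≤ ā N / n` suffices, so `D = max ((1 + ε) C / (A - 1)) (ā N)`.
-/

section Recursion

variable {A B C D : ℝ}

theorem one_sub_div_add_div_sq_nonneg {n : ℝ} (hB : 0 ≤ B) (hAn : A ≤ n) (hn : 0 < n) :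
    0 ≤ 1 - A / n + B / n ^ 2 := by
  have : A / n ≤ 1 := (div_le_one hn).2 hAn
  have : 0 ≤ B / n ^ 2 := by positivity
  linarith

theorem le_div_succ_of_recursion {n x y : ℝ} (hn : 0 < n) (hD : 0 ≤ D)
    (hq : 0 ≤ 1 - A / n + B / n ^ 2) (hx : x ≤ D / n)
    (hy : y ≤ (1 - A / n + B / n ^ 2) * x + C / n ^ 2)
    (hCD : C * n + B * D ≤ (A - 1) * D * n) :
    y ≤ D / (n + 1) := by
  have hstep : (1 - A / n + B / n ^ 2) * (D / n) + C / n ^ 2 ≤ D / (n + 1) := by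
    rw [show (1 - A / n + B / n ^ 2) * (D / n) + C / n ^ 2
        = ((n ^ 2 - A * n + B) * D + C * n) / n ^ 3 by field_simp,
      div_le_div_iff₀ (by positivity) (by positivity)]
    nlinarith [mul_le_mul_of_nonneg_right hCD hn.le]
  calc y ≤ (1 - A / n + B / n ^ 2) * x + C / n ^ 2 := hy
    _ ≤ (1 - A / n + B / n ^ 2) * (D / n) + C / n ^ 2 := by gcongr
    _ ≤ D / (n + 1) := hstep

theorem recursion_margin_of_one_add_mul_le {n ε : ℝ} (hε : 0 < ε) (hD : 0 ≤ D) (hn : 0 ≤ n)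
    (hB : B * (1 + ε) ≤ (A - 1) * ε * n) (hC : C * (1 + ε) ≤ (A - 1) * D) :
    C * n + B * D ≤ (A - 1) * D * n := by
  have : (C * n + B * D) * (1 + ε) ≤ (A - 1) * D * n * (1 + ε) := by
    nlinarith [mul_le_mul_of_nonneg_right hC hn, mul_le_mul_of_nonneg_right hB hD]
  exact le_of_mul_le_mul_right this (by linarith)

theorem le_div_of_recursion (a : ℕ → ℝ) (N : ℕ) (hN : 1 ≤ N) (hD : 0 ≤ D)
    (hinit : ∀ n : ℕ, 1 ≤ n → n ≤ N → a n ≤ D / n)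
    (htail : ∀ n : ℕ, N ≤ n →
      0 ≤ 1 - A / n + B / (n : ℝ) ^ 2 ∧ C * n + B * D ≤ (A - 1) * D * n)
    (hrec : ∀ n : ℕ, 1 ≤ n →
      a (n + 1) ≤ (1 - A / n + B / (n : ℝ) ^ 2) * a n + C / (n : ℝ) ^ 2) :
    ∀ n : ℕ, 1 ≤ n → a n ≤ D / n := by
  intro n hn
  induction n, hn using Nat.le_induction with
  | base => exact hinit 1 le_rfl hN
  | succ n hn ih =>
    rcases le_or_gt (n + 1) N with hsmall | hlarge
    · exact hinit (n + 1) (by omega) hsmall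
    · obtain ⟨hq, hCD⟩ := htail n (by omega)
      push_cast
      exact le_div_succ_of_recursion (by positivity) hD hq ih (hrec n hn) hCD

theorem recursion_le_max_div (hA : 1 < A) (hB : 0 ≤ B) {abar : ℝ} (habar : 0 < abar)
    {ε : ℝ} (hε : 0 < ε) :
    ∃ c : ℝ, 0 < c ∧ ∀ a : ℕ → ℝ,
      (∀ n : ℕ, 1 ≤ n → 0 ≤ a n ∧ a n ≤ abar) →
      (∀ n : ℕ, 1 ≤ n →
        a (n + 1) ≤ (1 - A / n + B / (n : ℝ) ^ 2) * a n + C / (n : ℝ) ^ 2) →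
      ∀ n : ℕ, 1 ≤ n → a n ≤ max ((1 + ε) * C / ((A - 1) * n)) (c / n) := by
  obtain ⟨N, hN⟩ := exists_nat_ge (max A (B * (1 + ε) / ((A - 1) * ε)))
  have hAN : A ≤ N := le_of_max_le_left hN
  have hBN : B * (1 + ε) ≤ (A - 1) * ε * N :=
    (div_le_iff₀' (by nlinarith)).1 (le_of_max_le_right hN)
  have hN1 : 1 ≤ N := by exact_mod_cast hA.le.trans hAN
  refine ⟨abar * N, by positivity, fun a hbound hrec n hn => ?_⟩
  set D := max ((1 + ε) * C / (A - 1)) (abar * N)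
  have hD : 0 ≤ D := le_max_of_le_right (by positivity)
  have hinit (n : ℕ) (hn : 1 ≤ n) (hnN : n ≤ N) : a n ≤ D / n := by
    have hn' : (0 : ℝ) < n := by exact_mod_cast hn
    rw [le_div_iff₀ hn']
    calc a n * n ≤ abar * N :=
          mul_le_mul (hbound n hn).2 (by exact_mod_cast hnN) hn'.le habar.le
      _ ≤ D := le_max_right _ _
  have hC : C * (1 + ε) ≤ (A - 1) * D := by
    have := le_max_left ((1 + ε) * C / (A - 1)) (abar * N)
    rw [div_le_iff₀ (by linarith)] at this
    linarith
  have htail (n : ℕ) (hNn : N ≤ n) :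
      0 ≤ 1 - A / n + B / (n : ℝ) ^ 2 ∧ C * n + B * D ≤ (A - 1) * D * n := by
    have hNn' : (N : ℝ) ≤ n := by exact_mod_cast hNn
    refine ⟨one_sub_div_add_div_sq_nonneg hB (hAN.trans hNn') (by linarith),
      recursion_margin_of_one_add_mul_le hε hD (by linarith) (hBN.trans ?_) hC⟩
    gcongr
  have hn' : (0 : ℝ) ≤ n := n.cast_nonneg
  rw [← div_div, max_div_div_right hn']
  exact le_div_of_recursion a N hN1 hD hinit htail hrec n hn

end Recursion

theorem one_over_n_stepsize_recursion_general
    (μ L M β abar : ℝ)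
    (hμ : 0 < μ) (hμL : μ ≤ L) (habar : 0 < abar)
    (hβ : 1 / (2 * μ) < β) :
    ∀ ε : ℝ, 0 < ε → ∃ c : ℝ, 0 < c ∧
      ∀ a : ℕ → ℝ,
        (∀ n : ℕ, 1 ≤ n → 0 ≤ a n ∧ a n ≤ abar) →
        (∀ n : ℕ, 1 ≤ n →
          a (n + 1) ≤ (1 - 2 * μ * β / n + μ * L * β ^ 2 / (n : ℝ) ^ 2) * a n
            + L * β ^ 2 * M / (2 * (n : ℝ) ^ 2)) →
        ∀ n : ℕ, 1 ≤ n →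
          a n ≤ max ((1 + ε) * L * β ^ 2 * M / ((4 * μ * β - 2) * n)) (c / n) := by
  intro ε hε
  have hA : 1 < 2 * μ * β := by
    rw [div_lt_iff₀ (by positivity)] at hβ
    linarith
  have hB : 0 ≤ μ * L * β ^ 2 := by have := hμ.trans_le hμL; positivity
  obtain ⟨c, hc, hbound⟩ := recursion_le_max_div (C := L * β ^ 2 * M / 2) hA hB habar hε
  refine ⟨c, hc, fun a ha hrec n hn => ?_⟩
  have hrec' (n : ℕ) (hn : 1 ≤ n) : a (n + 1) ≤
      (1 - 2 * μ * β / n + μ * L * β ^ 2 / (n : ℝ) ^ 2) * a n + L * β ^ 2 * M / 2 / (n : ℝ) ^ 2 :=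
    (hrec n hn).trans_eq (by ring)
  convert hbound a ha hrec' n hn using 2
  rw [show (4 * μ * β - 2) * (n : ℝ) = 2 * ((2 * μ * β - 1) * n) by ring, ← div_div]
  ring

/-- Deterministic recursion underlying the 1/i learning-rate case of Lemma 9
of the paper: an O(1/n) bound whose leading constant is proportional to the
gradient estimator's MSE bound M, with the constant c depending only on
(β, μ, L, M, ā, ε). -/
theorem one_over_n_stepsize_recursion
    (μ L M β abar : ℝ)
    (hμ : 0 < μ) (hμL : μ ≤ L) (hM : 0 ≤ M) (habar : 0 < abar)
    (hβ : 1 / (2 * μ) < β) :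
    ∀ ε : ℝ, 0 < ε → ∃ c : ℝ, 0 < c ∧
      ∀ a : ℕ → ℝ,
        (∀ n : ℕ, 1 ≤ n → 0 ≤ a n ∧ a n ≤ abar) →
        (∀ n : ℕ, 1 ≤ n →
          a (n + 1) ≤ (1 - 2 * μ * β / n + μ * L * β ^ 2 / (n : ℝ) ^ 2) * a n
            + L * β ^ 2 * M / (2 * (n : ℝ) ^ 2)) →
        ∀ n : ℕ, 1 ≤ n →
          a n ≤ max ((1 + ε) * L * β ^ 2 * M / ((4 * μ * β - 2) * n)) (c / n) :=
  one_over_n_stepsize_recursion_general μ L M β abar hμ hμL habar hβ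
end
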